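/- arXiv:2404.01142 — 2 statements merged into one kernel-verified Lean document; each statement's English description precedes it below -/
import Mathlib

section
/- Suppose F_τ(t) ∼ A t and F_τ^{(k)}(t) ∼ B t as t → 0⁺ with A, B > 0, and σ is gamma distributed with shape η > 0 and rate r > 0, independent of τ. Then P(κ = k | τ < σ) → B/A as r → ∞; in particular the limiting conditional hitting probability is strictly positive. -/
/-!
Let `G(s) = P(τ ≤ s, κ ∈ K)`. By independence, and because `τ` has only countably many atoms
while the gamma law has none, `P(κ ∈ K, τ < σ_r) = E[G(σ_r)]`. Since `σ_r` has the law of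
`σ_1 / r`, we get `r · E[G(σ_r)] = E[r G(σ_1 / r)]`, and `r G(u / r) → C u` pointwise when
`G(t) ∼ C t`; as `G ≤ 1` and `G(t) ≤ 2 C t` near `0`, `G(t) ≤ D t` for all `t > 0`, which
makes dominated convergence applicable, so
`r · P(κ ∈ K, τ < σ_r) → C E[σ_1] = C η`. Taking the ratio of the cases `K = {k}` and `K = univ`
gives `B η / (A η) = B / A`.
-/

open MeasureTheory ProbabilityTheory Real Filter Set Topology
open scoped ENNReal

lemma lintegral_comp_mul_left_of_pos {r : ℝ} (hr : 0 < r) {h : ℝ → ℝ≥0∞} (hh : Measurable h) :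
    ∫⁻ x, h (r * x) = ENNReal.ofReal r⁻¹ * ∫⁻ x, h x := by
  rw [← lintegral_map hh (measurable_const_mul r), Real.map_volume_mul_left hr.ne',
    lintegral_smul_measure, abs_of_pos (inv_pos.mpr hr), smul_eq_mul]

lemma ofReal_mul_gammaPDF_one_mul {a r : ℝ} (hr : 0 < r) (x : ℝ) :
    ENNReal.ofReal r * gammaPDF a 1 (r * x) = gammaPDF a r x := by
  rcases lt_or_ge x 0 with hx | hx
  · rw [gammaPDF_of_neg hx, gammaPDF_of_neg (mul_neg_of_pos_of_neg hr hx), mul_zero]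
  rw [gammaPDF_of_nonneg hx, gammaPDF_of_nonneg (by positivity), ← ENNReal.ofReal_mul hr.le,
    Real.mul_rpow hr.le hx, Real.one_rpow, one_mul,
    show a = 1 + (a - 1) by ring, Real.rpow_add hr, Real.rpow_one]
  ring_nf

lemma map_div_gammaMeasure_one {a r : ℝ} (hr : 0 < r) :
    (gammaMeasure a 1).map (· / r) = gammaMeasure a r := by
  refine Measure.ext_of_lintegral _ fun f hf => ?_
  have hpdf (b : ℝ) : Measurable (gammaPDF a b) := (measurable_gammaPDFReal a b).ennreal_ofReal
  set h : ℝ → ℝ≥0∞ := fun u => gammaPDF a 1 u * f (u / r)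
  have hh : Measurable h := (hpdf 1).mul (hf.comp (measurable_div_const r))
  calc ∫⁻ s, f s ∂(gammaMeasure a 1).map (· / r)
      = ∫⁻ u, h u := by
        rw [lintegral_map hf (measurable_div_const r), gammaMeasure]
        exact lintegral_withDensity_eq_lintegral_mul _ (hpdf 1) (hf.comp (measurable_div_const r))
    _ = ENNReal.ofReal r * ∫⁻ s, h (r * s) := by
        rw [lintegral_comp_mul_left_of_pos hr hh, ← mul_assoc, ← ENNReal.ofReal_mul hr.le,
          mul_inv_cancel₀ hr.ne', ENNReal.ofReal_one, one_mul]
    _ = ∫⁻ s, f s ∂gammaMeasure a r := by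
        rw [gammaMeasure, lintegral_withDensity_eq_lintegral_mul _ (hpdf r) hf,
          ← lintegral_const_mul' _ _ ENNReal.ofReal_ne_top]
        simp only [h, Pi.mul_apply, ← ofReal_mul_gammaPDF_one_mul hr, mul_assoc,
          mul_div_cancel_left₀ _ hr.ne']

instance (a r : ℝ) : NullSingletonClass (gammaMeasure a r) := by
  unfold gammaMeasure; infer_instance

lemma ae_pos_gammaMeasure (a r : ℝ) : ∀ᵐ u ∂gammaMeasure a r, 0 < u := by
  rw [gammaMeasure,
    ae_withDensity_iff (f := gammaPDF a r) (measurable_gammaPDFReal a r).ennreal_ofReal]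
  filter_upwards [Measure.ae_ne volume 0] with u hu0 hpdf
  exact lt_of_le_of_ne (not_lt.mp fun hu => hpdf (gammaPDF_of_neg hu)) hu0.symm

lemma lintegral_ofReal_gammaMeasure_one {a : ℝ} (ha : 0 < a) :
    ∫⁻ u, ENNReal.ofReal u ∂gammaMeasure a 1 = ENNReal.ofReal a := by
  have hpdf : Measurable (gammaPDF a 1) := (measurable_gammaPDFReal a 1).ennreal_ofReal
  have hsupp : (gammaPDF a 1 * fun u => ENNReal.ofReal u).support ⊆ Ioi 0 := by
    intro u hu
    by_contra h
    exact hu (by simp [ENNReal.ofReal_eq_zero.mpr (not_lt.mp h)])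
  have hI : IntegrableOn (fun u => exp (-u) * u ^ (a + 1 - 1) / Gamma a) (Ioi 0) :=
    (Real.GammaIntegral_convergent (by linarith)).div_const _
  rw [gammaMeasure, lintegral_withDensity_eq_lintegral_mul _ hpdf ENNReal.measurable_ofReal,
    ← setLIntegral_eq_of_support_subset hsupp,
    setLIntegral_congr_fun measurableSet_Ioi
      (g := fun u => ENNReal.ofReal (exp (-u) * u ^ (a + 1 - 1) / Gamma a)) ?_,
    ← ofReal_integral_eq_lintegral_ofReal hI ?_, integral_div,
    ← Real.Gamma_eq_integral (by linarith),
    Real.Gamma_add_one ha.ne', mul_div_cancel_right₀ _ (Real.Gamma_pos_of_pos ha).ne']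
  · filter_upwards [ae_restrict_mem measurableSet_Ioi] with u hu
    have hu : 0 < u := hu
    positivity
  · intro u hu
    have hu : 0 < u := hu
    rw [Pi.mul_apply, gammaPDF_of_nonneg hu.le, ← ENNReal.ofReal_mul (by positivity)]
    congr 1
    rw [Real.one_rpow, one_mul, add_sub_cancel_right, show a = (a - 1) + 1 by ring,
      Real.rpow_add_one hu.ne']
    ring_nf

lemma exists_pos_forall_le_mul_of_tendsto_div {f : ℝ → ℝ} (hf : ∀ t, f t ≤ 1) {C : ℝ}
    (hC : 0 < C) (hasym : Tendsto (fun t => f t / (C * t)) (𝓝[>] 0) (𝓝 1)) :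
    ∃ D > 0, ∀ t > 0, f t ≤ D * t := by
  obtain ⟨δ, hδ, hsmall⟩ := mem_nhdsGT_iff_exists_Ioo_subset.mp
    (hasym.eventually (gt_mem_nhds one_lt_two))
  refine ⟨max (2 * C) δ⁻¹, by positivity, fun t ht => ?_⟩
  rcases lt_or_ge t δ with htδ | htδ
  · have hlt : f t / (C * t) < 2 := hsmall ⟨ht, htδ⟩
    rw [div_lt_iff₀ (by positivity)] at hlt
    nlinarith [le_max_left (2 * C) δ⁻¹]
  · calc f t ≤ δ⁻¹ * t := (hf t).trans ((one_le_inv_mul₀ hδ).mpr htδ)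
      _ ≤ max (2 * C) δ⁻¹ * t := by gcongr; exact le_max_right _ _

lemma tendsto_mul_comp_div_atTop {f : ℝ → ℝ} {C u : ℝ} (hC : C ≠ 0) (hu : 0 < u)
    (hasym : Tendsto (fun t => f t / (C * t)) (𝓝[>] 0) (𝓝 1)) :
    Tendsto (fun r => r * f (u / r)) atTop (𝓝 (C * u)) := by
  have hdiv : Tendsto (fun r => u / r) atTop (𝓝[>] 0) :=
    tendsto_nhdsWithin_iff.mpr ⟨tendsto_id.const_div_atTop u,
      eventually_gt_atTop 0 |>.mono fun r hr => div_pos hu hr⟩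
  have hlim := (hasym.comp hdiv).const_mul (C * u)
  rw [mul_one] at hlim
  refine hlim.congr' ((eventually_gt_atTop 0).mono fun r hr => ?_)
  simp only [Function.comp_apply]
  field_simp

lemma tendsto_ofReal_mul_lintegral_comp_div {ν : Measure ℝ} (hpos : ∀ᵐ u ∂ν, 0 < u)
    (hmom : ∫⁻ u, ENNReal.ofReal u ∂ν ≠ ∞) {g : ℝ → ℝ≥0∞} (hg : Measurable g)
    (hg1 : ∀ t, g t ≤ 1) {C : ℝ} (hC : 0 < C)
    (hasym : Tendsto (fun t => (g t).toReal / (C * t)) (𝓝[>] 0) (𝓝 1)) :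
    Tendsto (fun r => ENNReal.ofReal r * ∫⁻ u, g (u / r) ∂ν) atTop
      (𝓝 (ENNReal.ofReal C * ∫⁻ u, ENNReal.ofReal u ∂ν)) := by
  have hg_ne_top (t : ℝ) : g t ≠ ∞ := ((hg1 t).trans_lt ENNReal.one_lt_top).ne
  obtain ⟨D, hD, hgD⟩ := exists_pos_forall_le_mul_of_tendsto_div
    (fun t => ENNReal.toReal_le_of_le_ofReal zero_le_one (by simpa using hg1 t)) hC hasym
  have hofReal {r : ℝ} (hr : 0 < r) (u : ℝ) :
      ENNReal.ofReal r * g (u / r) = ENNReal.ofReal (r * (g (u / r)).toReal) := by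
    rw [ENNReal.ofReal_mul hr.le, ENNReal.ofReal_toReal (hg_ne_top _)]
  simp_rw [← lintegral_const_mul' _ _ ENNReal.ofReal_ne_top]
  refine tendsto_lintegral_filter_of_dominated_convergence
    (fun u => ENNReal.ofReal D * ENNReal.ofReal u)
    (.of_forall fun r => (hg.comp (measurable_div_const r)).const_mul _) ?_
    (by rw [lintegral_const_mul' _ _ ENNReal.ofReal_ne_top]
        exact ENNReal.mul_ne_top ENNReal.ofReal_ne_top hmom) ?_
  · filter_upwards [eventually_gt_atTop 0] with r hr
    filter_upwards [hpos] with u hu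
    rw [hofReal hr, ← ENNReal.ofReal_mul hD.le]
    refine ENNReal.ofReal_le_ofReal ?_
    calc r * (g (u / r)).toReal ≤ r * (D * (u / r)) := by gcongr; exact hgD _ (by positivity)
      _ = D * u := by field_simp
  · filter_upwards [hpos] with u hu
    rw [← ENNReal.ofReal_mul hC.le]
    refine (ENNReal.tendsto_ofReal (tendsto_mul_comp_div_atTop hC.ne' hu hasym)).congr' ?_
    filter_upwards [eventually_gt_atTop 0] with r hr
    exact (hofReal hr u).symm

lemma tendsto_mul_lintegral_gammaMeasure {g : ℝ → ℝ≥0∞} (hg : Measurable g)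
    (hg1 : ∀ t, g t ≤ 1) {C η : ℝ} (hC : 0 < C) (hη : 0 < η)
    (hasym : Tendsto (fun t => (g t).toReal / (C * t)) (𝓝[>] 0) (𝓝 1)) :
    Tendsto (fun r => r * (∫⁻ s, g s ∂gammaMeasure η r).toReal) atTop (𝓝 (C * η)) := by
  have hlim := tendsto_ofReal_mul_lintegral_comp_div (ae_pos_gammaMeasure η 1)
    (by rw [lintegral_ofReal_gammaMeasure_one hη]; exact ENNReal.ofReal_ne_top) hg hg1 hC hasym
  rw [lintegral_ofReal_gammaMeasure_one hη, ← ENNReal.ofReal_mul hC.le] at hlim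
  have hlim_toReal := (ENNReal.tendsto_toReal ENNReal.ofReal_ne_top).comp hlim
  rw [ENNReal.toReal_ofReal (by positivity)] at hlim_toReal
  refine hlim_toReal.congr' ?_
  filter_upwards [eventually_gt_atTop 0] with r hr
  rw [← map_div_gammaMeasure_one hr, lintegral_map hg (measurable_div_const r),
    Function.comp_apply, ENNReal.toReal_mul, ENNReal.toReal_ofReal hr.le]

section
variable {Ω α β : Type*} [MeasurableSpace Ω] [MeasurableSpace α] [MeasurableSpace β]
  {μ : Measure Ω}

lemma ProbabilityTheory.IndepFun.measure_preimage_eq_lintegral_map [IsFiniteMeasure μ]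
    {X : Ω → α} {Y : Ω → β} (hXY : IndepFun X Y μ) (hX : Measurable X) (hY : Measurable Y)
    {S : Set (α × β)} (hS : MeasurableSet S) :
    μ ((fun ω => (X ω, Y ω)) ⁻¹' S) = ∫⁻ y, μ ((fun ω => (X ω, y)) ⁻¹' S) ∂μ.map Y := by
  rw [← Measure.map_apply (hX.prodMk hY) hS,
    (indepFun_iff_map_prod_eq_prod_map_map hX.aemeasurable hY.aemeasurable).mp hXY,
    Measure.prod_apply_symm hS]
  exact lintegral_congr fun y => Measure.map_apply hX (measurable_prodMk_right hS)

lemma ae_measure_preimage_singleton_eq_zero [SFinite μ] [MeasurableSingletonClass β]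
    {X : Ω → β} (hX : Measurable X) (ν : Measure β) [NullSingletonClass ν] :
    ∀ᵐ b ∂ν, μ {ω | X ω = b} = 0 :=
  ((Measure.countable_meas_level_set_pos hX).ae_notMem ν).mono fun _ hb =>
    nonpos_iff_eq_zero.mp (not_lt.mp hb)

lemma measure_mem_and_lt_eq_lintegral [IsFiniteMeasure μ] {τ σ : Ω → ℝ} {κ : Ω → β}
    (hτ : Measurable τ) (hκ : Measurable κ) (hσ : Measurable σ)
    (hind : IndepFun (fun ω => (τ ω, κ ω)) σ μ) {ν : Measure ℝ} [NullSingletonClass ν]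
    (hσν : μ.map σ = ν) {K : Set β} (hK : MeasurableSet K) :
    μ {ω | κ ω ∈ K ∧ τ ω < σ ω} = ∫⁻ s, μ {ω | τ ω ≤ s ∧ κ ω ∈ K} ∂ν := by
  have hS : MeasurableSet {p : (ℝ × β) × ℝ | p.1.2 ∈ K ∧ p.1.1 < p.2} :=
    (hK.preimage measurable_fst.snd).inter (measurableSet_lt measurable_fst.fst measurable_snd)
  subst hσν
  refine (hind.measure_preimage_eq_lintegral_map (hτ.prodMk hκ) hσ hS).trans
    (lintegral_congr_ae ?_)
  filter_upwards [ae_measure_preimage_singleton_eq_zero (μ := μ) hτ (μ.map σ)] with s hs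
  refine measure_eq_measure_of_null_sdiff (fun ω h => ⟨h.2.le, h.1⟩) ?_
  refine measure_mono_null (fun ω h => ?_) hs
  exact h.1.1.eq_of_not_lt fun hlt => h.2 ⟨h.1.2, hlt⟩

lemma tendsto_mul_measure_mem_and_lt_gamma [IsProbabilityMeasure μ] {τ : Ω → ℝ} {κ : Ω → β}
    {σ : ℝ → Ω → ℝ} (hτ : Measurable τ) (hκ : Measurable κ) (hσ : ∀ r, Measurable (σ r))
    {η : ℝ} (hη : 0 < η) (hdist : ∀ r > 0, μ.map (σ r) = gammaMeasure η r)
    (hindep : ∀ r > 0, IndepFun (fun ω => (τ ω, κ ω)) (σ r) μ)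
    {K : Set β} (hK : MeasurableSet K) {C : ℝ} (hC : 0 < C)
    (hasym : Tendsto (fun t => (μ {ω | τ ω ≤ t ∧ κ ω ∈ K}).toReal / (C * t)) (𝓝[>] 0) (𝓝 1)) :
    Tendsto (fun r => r * (μ {ω | κ ω ∈ K ∧ τ ω < σ r ω}).toReal) atTop (𝓝 (C * η)) := by
  have hmono : Monotone fun s => μ {ω | τ ω ≤ s ∧ κ ω ∈ K} :=
    fun s t hst => measure_mono fun ω h => ⟨h.1.trans hst, h.2⟩
  refine (tendsto_mul_lintegral_gammaMeasure hmono.measurable (fun _ => prob_le_one) hC hη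
    hasym).congr' ?_
  filter_upwards [eventually_gt_atTop 0] with r hr
  rw [measure_mem_and_lt_eq_lintegral hτ hκ (hσ r) (hindep r hr) (hdist r hr) hK]

end

theorem conditional_hitting_levy_general
    {Ω : Type*} [MeasurableSpace Ω] (μ : Measure Ω) [IsProbabilityMeasure μ]
    (τ : Ω → ℝ) (κ : Ω → ℕ) (k : ℕ) (σ : ℝ → Ω → ℝ)
    (hτ : Measurable τ) (hκ : Measurable κ) (hσ : ∀ r, Measurable (σ r))
    (A B η : ℝ)
    (hA : 0 < A) (hB : 0 < B) (hη : 0 < η)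
    (hdist : ∀ r > 0, Measure.map (σ r) μ = gammaMeasure η r)
    (hindep : ∀ r > 0, IndepFun (fun ω => (τ ω, κ ω)) (σ r) μ)
    (hF : Tendsto (fun t => (μ {ω | τ ω ≤ t}).toReal / (A * t)) (𝓝[>] 0) (𝓝 1))
    (hFk : Tendsto (fun t => (μ {ω | τ ω ≤ t ∧ κ ω = k}).toReal / (B * t))
      (𝓝[>] 0) (𝓝 1)) :
    Tendsto (fun r : ℝ =>
        (μ {ω | κ ω = k ∧ τ ω < σ r ω}).toReal / (μ {ω | τ ω < σ r ω}).toReal)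
      atTop (𝓝 (B / A)) ∧ 0 < B / A := by
  have hden : Tendsto (fun r => r * (μ {ω | τ ω < σ r ω}).toReal) atTop (𝓝 (A * η)) := by
    simpa using tendsto_mul_measure_mem_and_lt_gamma hτ hκ hσ hη hdist hindep
      MeasurableSet.univ hA (by simpa using hF)
  have hnum : Tendsto (fun r => r * (μ {ω | κ ω = k ∧ τ ω < σ r ω}).toReal) atTop
      (𝓝 (B * η)) :=
    tendsto_mul_measure_mem_and_lt_gamma hτ hκ hσ hη hdist hindep
      (measurableSet_singleton k) hB hFk
  have hratio := hnum.div hden (by positivity)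
  rw [mul_div_mul_right _ _ hη.ne'] at hratio
  refine ⟨hratio.congr' ?_, div_pos hB hA⟩
  filter_upwards [eventually_gt_atTop 0] with r hr
  exact mul_div_mul_left _ _ hr.ne'

/-- The `m = n = 1` power-law case (superdiffusive Lévy flights): if `F_τ(t) ∼ A t` and
`F_τ^{(k)}(t) ∼ B t` as `t → 0⁺` and `σ_r` is gamma with shape `η`, rate `r`, independent
of `(τ, κ)`, then `P(κ = k | τ < σ_r) → B/A` as `r → ∞`, which is strictly positive. -/
theorem conditional_hitting_levy
    {Ω : Type*} [MeasurableSpace Ω] (μ : Measure Ω) [IsProbabilityMeasure μ]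
    (τ : Ω → ℝ) (κ : Ω → ℕ) (k : ℕ) (σ : ℝ → Ω → ℝ)
    (hτ : Measurable τ) (hκ : Measurable κ) (hσ : ∀ r, Measurable (σ r))
    (hτpos : ∀ᵐ ω ∂μ, 0 < τ ω)
    (A B η : ℝ)
    (hA : 0 < A) (hB : 0 < B) (hη : 0 < η)
    (hdist : ∀ r > 0, Measure.map (σ r) μ = gammaMeasure η r)
    (hindep : ∀ r > 0, IndepFun (fun ω => (τ ω, κ ω)) (σ r) μ)
    (hF : Tendsto (fun t => (μ {ω | τ ω ≤ t}).toReal / (A * t)) (𝓝[>] 0) (𝓝 1))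
    (hFk : Tendsto (fun t => (μ {ω | τ ω ≤ t ∧ κ ω = k}).toReal / (B * t))
      (𝓝[>] 0) (𝓝 1))
    (hppos : ∀ r > 0, 0 < (μ {ω | τ ω < σ r ω}).toReal)
    (hpkpos : ∀ r > 0, 0 < (μ {ω | κ ω = k ∧ τ ω < σ r ω}).toReal) :
    Tendsto (fun r : ℝ =>
        (μ {ω | κ ω = k ∧ τ ω < σ r ω}).toReal / (μ {ω | τ ω < σ r ω}).toReal)
      atTop (𝓝 (B / A)) ∧ 0 < B / A :=
  conditional_hitting_levy_general μ τ κ k σ hτ hκ hσ A B η hA hB hη hdist hindep hF hFk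
end

section
/- For m ∈ ℝ and C > 0, the integral ∫₀^{2/r} t^m e^{-C/t} dt is asymptotically equivalent to (1/C)·(2/r)^{m+2}·e^{-Cr/2} as r → ∞. -/
/-! Differentiating `t ^ (m + 2) * exp (-C / t)` and integrating over `(0, ε)` gives
`C * I m ε + (m + 2) * I (m + 1) ε = ε ^ (m + 2) * exp (-C / ε)` for
`I m ε = ∫ t in (0, ε), t ^ m * exp (-C / t)`. Since `I (m + 1) ε ≤ ε * I m ε`, the second term
is negligible as `ε → 0⁺`, so `C * I m ε ∼ ε ^ (m + 2) * exp (-C / ε)`; then put `ε = 2 / r`. -/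

open MeasureTheory Real Filter Set Topology Asymptotics

theorem ContinuousOn.integrableOn_Ioo_of_tendsto {E : Type*} [NormedAddCommGroup E]
    {f : ℝ → E} {a b : ℝ} {la lb : E} (hf : ContinuousOn f (Ioo a b))
    (ha : Tendsto f (𝓝[>] a) (𝓝 la)) (hb : Tendsto f (𝓝[<] b) (𝓝 lb)) :
    IntegrableOn f (Ioo a b) :=
  ((continuousOn_Icc_extendFrom_Ioo hf ha hb).integrableOn_Icc.mono_set
    Ioo_subset_Icc_self).congr_fun (extendFrom_extends hf) measurableSet_Ioo

theorem tendsto_rpow_mul_exp_neg_div_nhdsGT_zero (m : ℝ) {C : ℝ} (hC : 0 < C) :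
    Tendsto (fun t : ℝ => t ^ m * exp (-C / t)) (𝓝[>] 0) (𝓝 0) := by
  refine ((tendsto_rpow_mul_exp_neg_mul_atTop_nhds_zero (-m) C hC).comp
    tendsto_inv_nhdsGT_zero).congr' ?_
  filter_upwards [self_mem_nhdsWithin] with t (ht : 0 < t)
  simp [inv_rpow ht.le, rpow_neg ht.le, div_eq_mul_inv]

theorem continuousAt_rpow_mul_exp_neg_div (m C : ℝ) {t : ℝ} (ht : t ≠ 0) :
    ContinuousAt (fun t : ℝ => t ^ m * exp (-C / t)) t :=
  (continuousAt_id.rpow_const (.inl ht)).mul (continuousAt_const.div continuousAt_id ht).rexp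

theorem integrableOn_rpow_mul_exp_neg_div (m : ℝ) {C : ℝ} (hC : 0 < C) (ε : ℝ) :
    IntegrableOn (fun t : ℝ => t ^ m * exp (-C / t)) (Ioo 0 ε) := by
  rcases le_or_gt ε 0 with hε | hε
  · simp [Ioo_eq_empty_of_le hε]
  exact ContinuousOn.integrableOn_Ioo_of_tendsto
    (fun t ht => (continuousAt_rpow_mul_exp_neg_div m C ht.1.ne').continuousWithinAt)
    (tendsto_rpow_mul_exp_neg_div_nhdsGT_zero m hC)
    ((continuousAt_rpow_mul_exp_neg_div m C hε.ne').tendsto.mono_left nhdsWithin_le_nhds)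

theorem hasDerivAt_rpow_mul_exp_neg_div (m C : ℝ) {t : ℝ} (ht : 0 < t) :
    HasDerivAt (fun t : ℝ => t ^ (m + 2) * exp (-C / t))
      (C * (t ^ m * exp (-C / t)) + (m + 2) * (t ^ (m + 1) * exp (-C / t))) t := by
  have hpow : HasDerivAt (fun t : ℝ => t ^ (m + 2)) ((m + 2) * t ^ (m + 1)) t := by
    have := hasDerivAt_rpow_const (x := t) (p := m + 2) (.inl ht.ne')
    rwa [show m + 2 - 1 = m + 1 by ring] at this
  have hinv : HasDerivAt (fun t : ℝ => -C / t) (C / t ^ 2) t := by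
    simpa [div_eq_mul_inv] using (hasDerivAt_inv ht.ne').const_mul (-C)
  refine (hpow.mul hinv.exp).congr_deriv ?_
  rw [rpow_add ht, rpow_add ht, rpow_one, rpow_two]
  field_simp
  ring

theorem integral_rpow_mul_exp_neg_div_recursion (m : ℝ) {C ε : ℝ} (hC : 0 < C) (hε : 0 < ε) :
    (C * ∫ t in Ioo 0 ε, t ^ m * exp (-C / t))
      + (m + 2) * ∫ t in Ioo 0 ε, t ^ (m + 1) * exp (-C / t) = ε ^ (m + 2) * exp (-C / ε) := by
  have hm := (integrableOn_rpow_mul_exp_neg_div m hC ε).const_mul C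
  have hm1 := (integrableOn_rpow_mul_exp_neg_div (m + 1) hC ε).const_mul (m + 2)
  have hFTC := intervalIntegral.integral_eq_sub_of_hasDerivAt_of_tendsto hε
    (fun t ht => hasDerivAt_rpow_mul_exp_neg_div m C ht.1)
    ((intervalIntegrable_iff_integrableOn_Ioo_of_le hε.le).mpr (hm.add hm1))
    (by simpa using tendsto_rpow_mul_exp_neg_div_nhdsGT_zero (m + 2) hC)
    ((continuousAt_rpow_mul_exp_neg_div (m + 2) C hε.ne').tendsto.mono_left nhdsWithin_le_nhds)
  rwa [intervalIntegral.integral_of_le hε.le, integral_Ioc_eq_integral_Ioo, integral_add hm hm1,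
    integral_const_mul, integral_const_mul, sub_zero] at hFTC

theorem integral_rpow_succ_mul_exp_neg_div_le (m : ℝ) {C : ℝ} (hC : 0 < C) (ε : ℝ) :
    ∫ t in Ioo 0 ε, t ^ (m + 1) * exp (-C / t) ≤ ε * ∫ t in Ioo 0 ε, t ^ m * exp (-C / t) := by
  rw [← integral_const_mul]
  refine setIntegral_mono_on (integrableOn_rpow_mul_exp_neg_div (m + 1) hC ε)
    ((integrableOn_rpow_mul_exp_neg_div m hC ε).const_mul ε) measurableSet_Ioo fun t ht => ?_
  rw [rpow_add_one ht.1.ne', mul_right_comm, mul_comm ε]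
  have := ht.1
  exact mul_le_mul_of_nonneg_left ht.2.le (by positivity)

theorem isEquivalent_integral_rpow_mul_exp_neg_div (m : ℝ) {C : ℝ} (hC : 0 < C) :
    (fun ε => C * ∫ t in Ioo 0 ε, t ^ m * exp (-C / t)) ~[𝓝[>] 0]
      fun ε => ε ^ (m + 2) * exp (-C / ε) := by
  set I := fun ε => ∫ t in Ioo 0 ε, t ^ m * exp (-C / t)
  set J := fun ε => ∫ t in Ioo 0 ε, t ^ (m + 1) * exp (-C / t)
  have hJ : (fun ε => (m + 2) * J ε) =O[𝓝[>] 0] fun ε => ε * (C * I ε) := by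
    refine IsBigO.of_bound (|m + 2| / C) ?_
    filter_upwards [self_mem_nhdsWithin] with ε (hε : 0 < ε)
    have hI0 : 0 ≤ I ε := setIntegral_nonneg measurableSet_Ioo fun t ht => by
      have := ht.1; positivity
    have hJ0 : 0 ≤ J ε := setIntegral_nonneg measurableSet_Ioo fun t ht => by
      have := ht.1; positivity
    rw [norm_mul, norm_mul, norm_mul, Real.norm_of_nonneg hJ0, Real.norm_of_nonneg hI0,
      Real.norm_of_nonneg hε.le, Real.norm_of_nonneg hC.le, Real.norm_eq_abs]
    calc |m + 2| * J ε ≤ |m + 2| * (ε * I ε) := by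
          gcongr; exact integral_rpow_succ_mul_exp_neg_div_le m hC ε
      _ = |m + 2| / C * (ε * (C * I ε)) := by field_simp
  have hsmall : (fun ε => ε * (C * I ε)) =o[𝓝[>] 0] fun ε => C * I ε := by
    simpa using ((isLittleO_one_iff ℝ).mpr (tendsto_id.mono_left nhdsWithin_le_nhds)).mul_isBigO
      (isBigO_refl (fun ε => C * I ε) _)
  refine IsEquivalent.symm ((hJ.trans_isLittleO hsmall).congr' ?_ EventuallyEq.rfl)
  filter_upwards [self_mem_nhdsWithin] with ε (hε : 0 < ε)
  rw [Pi.sub_apply, ← integral_rpow_mul_exp_neg_div_recursion m hC hε]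
  ring

/-- For `m ∈ ℝ` and `C > 0`,
`∫₀^{2/r} t^m e^{-C/t} dt ∼ (1/C)(2/r)^{m+2} e^{-Cr/2}` as `r → ∞`. -/
theorem uniform_window_asymptotic (m C : ℝ) (hC : 0 < C) :
    Tendsto (fun r : ℝ =>
        (∫ t in Ioo (0:ℝ) (2 / r), t ^ m * Real.exp (-C / t)) /
          (1 / C * (2 / r) ^ (m + 2) * Real.exp (-C * r / 2)))
      atTop (𝓝 1) := by
  have htwo_div : Tendsto (fun r : ℝ => 2 / r) atTop (𝓝[>] 0) :=
    (tendsto_inv_atTop_nhdsGT_zero.comp (tendsto_id.atTop_div_const two_pos)).congr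
      fun r => inv_div r 2
  have hne : ∀ᶠ ε in 𝓝[>] (0 : ℝ), ε ^ (m + 2) * exp (-C / ε) ≠ 0 := by
    filter_upwards [self_mem_nhdsWithin] with ε (hε : 0 < ε)
    positivity
  refine (((isEquivalent_iff_tendsto_one hne).mp
    (isEquivalent_integral_rpow_mul_exp_neg_div m hC)).comp htwo_div).congr' ?_
  filter_upwards [eventually_gt_atTop 0] with r hr
  rw [Function.comp_apply, Pi.div_apply, div_div_eq_mul_div]
  field_simp
end
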